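/- arXiv:2406.03238 — 3 statements merged into one kernel-verified Lean document; each statement's English description precedes it below -/
import Mathlib

section
/- If V is a k-vector space equipped with a Frobenius map F_V, then the fixed-point set V^{F_V} is an 𝔽_q-linear subspace of V, and the natural k-linear map k ⊗_{𝔽_q} V^{F_V} → V given by λ ⊗ v ↦ λv is an isomorphism of k-vector spaces. -/
/-!
Fixed vectors that are linearly independent over `F` stay independent over `k`: normalise a
shortest `k`-linear relation among them to have a coefficient `1`; applying `Fr` raises
the coefficients to the `q`-th power, and subtracting the two relations gives a shorter one, so all
coefficients satisfy `x ^ q = x`, i.e. lie in `F`.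

Conversely every `v` is a `k`-combination of fixed vectors. If `Frᵐ v = v`, each Lagrange resolvent
`∑_{i<m} c^(q^i) • Frⁱ v` with `c^(q^m) = c` is fixed. Taking `c = ζ^j` for a primitive
`(q^m - 1)`-th root of unity `ζ`, the coefficients `(ζ^j)^(q^i) = (ζ^(q^i))^j` form a Vandermonde
matrix with distinct nodes, which can be inverted to recover `v`.
-/

open scoped TensorProduct

namespace FrobeniusFixed

structure FrobeniusMap (q : ℕ) (k : Type*) (V : Type*) [Field k]
    [AddCommGroup V] [Module k V] where
  toFun : V → V
  bijective : Function.Bijective toFun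
  map_add : ∀ v w : V, toFun (v + w) = toFun v + toFun w
  map_smulq : ∀ (c : k) (v : V), toFun (c • v) = c ^ q • toFun v
  locally_finite : ∀ v : V, ∃ m : ℕ, 1 ≤ m ∧ toFun^[m] v = v

end FrobeniusFixed

open Polynomial in
theorem mem_range_algebraMap_of_pow_card_eq_self {F K : Type*} [Field F] [Fintype F] [Field K]
    [Algebra F K] {x : K} (hx : x ^ Fintype.card F = x) : x ∈ (algebraMap F K).range := by
  have hroots := roots_map_of_injective_of_card_eq_natDegree (algebraMap F K).injective
    (p := X ^ Fintype.card F - X) <| by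
      rw [FiniteField.roots_X_pow_card_sub_X,
        FiniteField.X_pow_card_sub_X_natDegree_eq F Fintype.one_lt_card]
      rfl
  have hx' : x ∈ (map (algebraMap F K) (X ^ Fintype.card F - X)).roots := by
    rw [mem_roots_map (FiniteField.X_pow_card_sub_X_ne_zero F Fintype.one_lt_card)]
    simp [hx]
  rw [← hroots, FiniteField.roots_X_pow_card_sub_X] at hx'
  obtain ⟨c, -, rfl⟩ := Multiset.mem_map.1 hx'
  exact ⟨c, rfl⟩

theorem Nat.pow_lt_pow_sub_one {q m i : ℕ} (hq : 1 < q) (hi : i < m) (hm : m ≠ 1) :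
    q ^ i < q ^ m - 1 := by
  have h1 : q ^ i * 2 ≤ q ^ m := by
    calc q ^ i * 2 ≤ q ^ i * q := Nat.mul_le_mul_left _ hq
      _ = q ^ (i + 1) := (pow_succ q i).symm
      _ ≤ q ^ m := Nat.pow_le_pow_right (by omega) hi
  rcases Nat.eq_zero_or_pos i with rfl | hi0
  · have : q ^ 2 ≤ q ^ m := Nat.pow_le_pow_right (by omega) (by omega)
    have : 2 * 2 ≤ q ^ 2 := by rw [sq]; exact Nat.mul_le_mul hq hq
    rw [pow_zero]
    omega
  · have : q ≤ q ^ i := Nat.le_self_pow hi0.ne' q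
    omega

theorem IsPrimitiveRoot.injective_pow_pow {k : Type*} [CommMonoid k] {ζ : k} {q m : ℕ}
    (hζ : IsPrimitiveRoot ζ (q ^ m - 1)) (hq : 1 < q) :
    Function.Injective fun i : Fin m => ζ ^ q ^ (i : ℕ) := by
  intro a b hab
  rcases eq_or_ne m 1 with rfl | hm
  · exact Subsingleton.elim a b
  exact Fin.ext <| Nat.pow_right_injective hq <|
    hζ.pow_inj (Nat.pow_lt_pow_sub_one hq a.isLt hm) (Nat.pow_lt_pow_sub_one hq b.isLt hm) hab

namespace FrobeniusFixed.FrobeniusMap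

variable {q : ℕ} {k V : Type*} [Field k] [AddCommGroup V] [Module k V] (Fr : FrobeniusMap q k V)

def toAddMonoidHom : V →+ V := AddMonoidHom.mk' Fr.toFun Fr.map_add

theorem map_zero : Fr.toFun 0 = 0 :=
  Fr.toAddMonoidHom.map_zero

theorem map_sum {ι : Type*} (s : Finset ι) (f : ι → V) :
    Fr.toFun (∑ i ∈ s, f i) = ∑ i ∈ s, Fr.toFun (f i) :=
  _root_.map_sum Fr.toAddMonoidHom f s

theorem sum_pow_smul_eq_zero {ι : Type*} {s : Finset ι} {g : ι → k} {v : ι → V}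
    (hv : ∀ i, Fr.toFun (v i) = v i) (h : ∑ i ∈ s, g i • v i = 0) :
    ∑ i ∈ s, g i ^ q • v i = 0 := by
  have := congrArg Fr.toFun h
  rw [Fr.map_sum, Fr.map_zero] at this
  simpa [Fr.map_smulq, hv] using this

section FixedPoints

variable {F : Type*} [Field F] [Fintype F] [Algebra F k] [Module F V] [IsScalarTower F k V]

def fixedPoints (hF : Fintype.card F = q) : Submodule F V where
  carrier := {v | Fr.toFun v = v}
  add_mem' {v w} (hv : Fr.toFun v = v) (hw : Fr.toFun w = w) :=
    show Fr.toFun (v + w) = v + w by rw [Fr.map_add, hv, hw]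
  zero_mem' := Fr.map_zero
  smul_mem' c v (hv : Fr.toFun v = v) := show Fr.toFun (c • v) = c • v by
    have hc : c ^ q = c := hF ▸ FiniteField.pow_card c
    rw [← algebraMap_smul k c v, Fr.map_smulq, ← map_pow, hc, hv]

theorem linearIndependent_of_forall_fixed (hF : Fintype.card F = q) {ι : Type*} {v : ι → V}
    (hv : ∀ i, Fr.toFun (v i) = v i) (hli : LinearIndependent F v) : LinearIndependent k v := by
  classical
  rw [linearIndependent_iff'] at hli ⊢
  intro s
  induction s using Finset.strongInduction with
  | H s ih =>
  intro g hg j hj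
  by_contra hgj
  set h : ι → k := fun i => (g j)⁻¹ * g i with h_def
  have hhj : h j = 1 := inv_mul_cancel₀ hgj
  have hsum : ∑ i ∈ s, h i • v i = 0 := by
    simp only [h_def, mul_smul, ← Finset.smul_sum, hg, smul_zero]
  have hsub : ∑ i ∈ s.erase j, (h i ^ q - h i) • v i = 0 := by
    rw [Finset.sum_erase s (by simp [hhj])]
    simp only [sub_smul, Finset.sum_sub_distrib, Fr.sum_pow_smul_eq_zero hv hsum, hsum, sub_zero]
  have hpow : ∀ i ∈ s, h i ^ Fintype.card F = h i := by
    intro i hi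
    rw [hF]
    rcases eq_or_ne i j with rfl | hij
    · rw [hhj, one_pow]
    · exact sub_eq_zero.1 <|
        ih _ (Finset.erase_ssubset hj) _ hsub i (Finset.mem_erase.2 ⟨hij, hi⟩)
  choose! c hc using fun i hi => mem_range_algebraMap_of_pow_card_eq_self (hpow i hi)
  have hcsum : ∑ i ∈ s, c i • v i = 0 := by
    rw [← hsum]
    exact Finset.sum_congr rfl fun i hi => by rw [← hc i hi, algebraMap_smul]
  have := hc j hj
  rw [hli s c hcsum j hj, _root_.map_zero, hhj] at this
  exact zero_ne_one this

end FixedPoints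

def lagrangeResolvent (m : ℕ) (c : k) (v : V) : V :=
  ∑ i ∈ Finset.range m, c ^ q ^ i • Fr.toFun^[i] v

theorem lagrangeResolvent_fixed {m : ℕ} {v : V} (hv : Fr.toFun^[m] v = v) {c : k}
    (hc : c ^ q ^ m = c) :
    Fr.toFun (Fr.lagrangeResolvent m c v) = Fr.lagrangeResolvent m c v := by
  set a : ℕ → V := fun i => c ^ q ^ i • Fr.toFun^[i] v
  have hshift : ∀ i, Fr.toFun (a i) = a (i + 1) := fun i => by
    simp only [a, Fr.map_smulq, ← pow_mul, ← pow_succ, Function.iterate_succ_apply']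
  have hperiod : a m = a 0 := by
    simp only [a, hc, hv, pow_zero, pow_one, Function.iterate_zero_apply]
  show Fr.toFun (∑ i ∈ Finset.range m, a i) = ∑ i ∈ Finset.range m, a i
  simp only [Fr.map_sum, hshift]
  refine add_right_cancel (b := a 0) ?_
  rw [← Finset.sum_range_succ', Finset.sum_range_succ, hperiod]

theorem self_mem_span_lagrangeResolvent (hq : 1 < q) {m : ℕ} (hm : 0 < m) {ζ : k}
    (hζ : IsPrimitiveRoot ζ (q ^ m - 1)) (v : V) :
    v ∈ Submodule.span k
      (Set.range fun j : Fin m => Fr.lagrangeResolvent m (ζ ^ (j : ℕ)) v) := by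
  set M := Matrix.vandermonde fun i : Fin m => ζ ^ q ^ (i : ℕ)
  have hM : IsUnit M := (Matrix.isUnit_iff_isUnit_det M).2 <| isUnit_iff_ne_zero.2 <|
    Matrix.det_vandermonde_ne_zero_iff.2 (hζ.injective_pow_pow hq)
  obtain ⟨a, ha⟩ := Matrix.mulVec_surjective_iff_isUnit.2 hM (Pi.single ⟨0, hm⟩ 1)
  refine (Submodule.mem_span_range_iff_exists_fun k).2 ⟨a, ?_⟩
  calc
    _ = ∑ i : Fin m, M.mulVec a i • Fr.toFun^[i] v := by
      simp only [lagrangeResolvent, Finset.sum_range, Finset.smul_sum, smul_smul, Matrix.mulVec,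
        dotProduct, Finset.sum_smul, M, Matrix.vandermonde_apply]
      rw [Finset.sum_comm]
      refine Finset.sum_congr rfl fun i _ => Finset.sum_congr rfl fun j _ => ?_
      rw [← pow_mul, ← pow_mul, mul_comm (j : ℕ), mul_comm (a j)]
    _ = v := by simp [ha, Pi.single_apply]

theorem mem_span_fixed [IsAlgClosed k] (hq : 1 < q) (hqk : (q : k) = 0) (v : V) :
    v ∈ Submodule.span k {w | Fr.toFun w = w} := by
  obtain ⟨m, hm, hv⟩ := Fr.locally_finite v
  have : NeZero ((q ^ m - 1 : ℕ) : k) := ⟨by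
    rw [Nat.cast_sub (Nat.one_le_pow _ _ (by omega)), Nat.cast_pow, hqk, zero_pow (by omega)]
    simp⟩
  obtain ⟨ζ, hζ⟩ := HasEnoughRootsOfUnity.exists_primitiveRoot k (q ^ m - 1)
  have hζq : ζ ^ q ^ m = ζ := by
    rw [← Nat.sub_add_cancel (Nat.one_le_pow _ _ (by omega) : 1 ≤ q ^ m), pow_succ,
      hζ.pow_eq_one, one_mul]
  refine Submodule.span_mono ?_ (Fr.self_mem_span_lagrangeResolvent hq hm hζ v)
  rintro _ ⟨j, rfl⟩
  refine Fr.lagrangeResolvent_fixed hv ?_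
  rw [← pow_mul, mul_comm, pow_mul, hζq]

end FrobeniusFixed.FrobeniusMap

section BaseChange

variable {F k V : Type*} [CommSemiring F] [CommSemiring k] [Algebra F k] [AddCommMonoid V]
  [Module k V] [Module F V] [IsScalarTower F k V] {W : Submodule F V}

theorem liftBaseChange_subtype_injective {ι : Type*} (b : Module.Basis ι F W)
    (hb : LinearIndependent k fun i => (b i : V)) :
    Function.Injective (W.subtype.liftBaseChange k) := by
  have : W.subtype.liftBaseChange k = (b.baseChange k).constr k fun i => (b i : V) :=
    (b.baseChange k).ext fun i => by
      rw [Module.Basis.constr_basis, Module.Basis.baseChange_apply,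
        LinearMap.liftBaseChange_one_tmul]
      rfl
  rw [this]
  exact (b.baseChange k).injective_constr_of_linearIndependent hb

theorem liftBaseChange_subtype_surjective (hW : Submodule.span k (W : Set V) = ⊤) :
    Function.Surjective (W.subtype.liftBaseChange k) := by
  rw [← LinearMap.range_eq_top, LinearMap.range_liftBaseChange, Submodule.range_subtype, hW]

end BaseChange

namespace FrobeniusFixed

theorem fixedPoints_submodule_and_baseChange_general
    (q : ℕ)
    (F : Type) [Field F] [Fintype F] (hF : Fintype.card F = q)
    (k : Type) [Field k] [Algebra F k] [IsAlgClosure F k]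
    (V : Type) [AddCommGroup V] [Module k V] [Module F V] [IsScalarTower F k V]
    (Fr : FrobeniusMap q k V) :
    ∃ W : Submodule F V, (∀ v : V, v ∈ W ↔ Fr.toFun v = v) ∧
      ∃ e : (k ⊗[F] W) ≃ₗ[k] V, ∀ (c : k) (w : W), e (c ⊗ₜ[F] w) = c • (w : V) := by
  have : IsAlgClosed k := IsAlgClosure.isAlgClosed F
  have hq : 1 < q := hF ▸ Fintype.one_lt_card
  have hqk : (q : k) = 0 := by
    rw [← hF, ← map_natCast (algebraMap F k), FiniteField.cast_card_eq_zero, map_zero]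
  let W := Fr.fixedPoints hF
  let b := Module.Basis.ofVectorSpace F W
  have hb : LinearIndependent k fun i => (b i : V) :=
    Fr.linearIndependent_of_forall_fixed hF (fun i => (b i).2)
      (b.linearIndependent.map' W.subtype W.ker_subtype)
  have hspan : Submodule.span k (W : Set V) = ⊤ :=
    eq_top_iff.2 fun v _ => Fr.mem_span_fixed hq hqk v
  exact ⟨W, fun v => Iff.rfl, LinearEquiv.ofBijective _
    ⟨liftBaseChange_subtype_injective b hb, liftBaseChange_subtype_surjective hspan⟩,
    fun c w => rfl⟩

/-- The fixed points of a Frobenius map form an `𝔽_q`-subspace `W` of `V`, and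
`k ⊗_{𝔽_q} W ≃ V` via `λ ⊗ v ↦ λ • v`. -/
theorem fixedPoints_submodule_and_baseChange
    (p n q : ℕ) (hp : p.Prime) (hn : 0 < n) (hq : q = p ^ n)
    (F : Type) [Field F] [Fintype F] (hF : Fintype.card F = q)
    (k : Type) [Field k] [Algebra F k] [IsAlgClosure F k]
    (V : Type) [AddCommGroup V] [Module k V] [Module F V] [IsScalarTower F k V]
    (Fr : FrobeniusMap q k V) :
    ∃ W : Submodule F V, (∀ v : V, v ∈ W ↔ Fr.toFun v = v) ∧
      ∃ e : (k ⊗[F] W) ≃ₗ[k] V, ∀ (c : k) (w : W), e (c ⊗ₜ[F] w) = c • (w : V) :=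
  fixedPoints_submodule_and_baseChange_general q F hF k V Fr

end FrobeniusFixed
end

section
/- If A is a k-algebra equipped with a Frobenius morphism F_A, then the fixed-point set A^{F_A} is an 𝔽_q-subalgebra of A, and the natural map k ⊗_{𝔽_q} A^{F_A} → A given by λ ⊗ a ↦ λa is an isomorphism of k-algebras. -/
/-!
The fixed points are closed under the algebra operations, and the fixed points of `x ↦ x ^ q` in `k`
are exactly `𝔽_q`, so they form an `𝔽_q`-subalgebra `S`. An `𝔽_q`-basis of `S` stays
`k`-independent in `A`: subtracting the Frobenius image of a minimal `k`-relation normalised to have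
a coefficient `1` leaves a shorter relation, so all coefficients lie in `𝔽_q`. It also spans `A`:
if `F_A^m a = a`, then for every `x` with `x ^ q ^ m = x` the vector `∑_{i<m} x^(q^i) F_A^i a` is
fixed, and `a` is a `k`-combination of these because the vectors `(x^(q^i))_{i<m}` span `k^m`:
a linear form killing all of them yields a `q`-polynomial of degree `< q^m` with `q^m` roots.
-/

open scoped TensorProduct

namespace FrobeniusFixedAlg

/-- A Frobenius map on a `k`-vector space `V` (relative to `q`). -/
structure FrobeniusMap (q : ℕ) (k : Type*) (V : Type*) [Field k]
    [AddCommGroup V] [Module k V] where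
  toFun : V → V
  bijective : Function.Bijective toFun
  map_add : ∀ v w : V, toFun (v + w) = toFun v + toFun w
  map_smulq : ∀ (c : k) (v : V), toFun (c • v) = c ^ q • toFun v
  locally_finite : ∀ v : V, ∃ m : ℕ, 1 ≤ m ∧ toFun^[m] v = v

/-- A Frobenius morphism on a `k`-algebra `A`: a Frobenius map on the underlying
vector space preserving the unit and the multiplication. -/
structure FrobeniusAlgMor (q : ℕ) (k : Type*) (A : Type*) [Field k] [Ring A]
    [Algebra k A] extends FrobeniusMap q k A where
  map_one : toFun 1 = 1
  map_mul : ∀ a b : A, toFun (a * b) = toFun a * toFun b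

open Polynomial

lemma mem_range_algebraMap_of_pow_card_eq {F K : Type*} [Field F] [Fintype F] [CommRing K]
    [IsDomain K] [Algebra F K] {x : K} (hx : x ^ Fintype.card F = x) :
    x ∈ Set.range (algebraMap F K) := by
  classical
  have hq := Fintype.one_lt_card (α := F)
  have hroots := roots_map_of_injective_of_card_eq_natDegree (algebraMap F K).injective
    (p := X ^ Fintype.card F - X)
    (by simp [FiniteField.roots_X_pow_card_sub_X, FiniteField.X_pow_card_sub_X_natDegree_eq F hq])
  have hx' : x ∈ ((X ^ Fintype.card F - X : F[X]).map (algebraMap F K)).roots := by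
    rw [mem_roots_map (FiniteField.X_pow_card_sub_X_ne_zero F hq)]
    simp [hx]
  rw [← hroots, FiniteField.roots_X_pow_card_sub_X] at hx'
  obtain ⟨c, -, rfl⟩ := Multiset.mem_map.mp hx'
  exact ⟨c, rfl⟩

lemma card_roots_toFinset_X_pow_sub_X {k : Type*} [Field k] [DecidableEq k] [IsAlgClosed k]
    {N : ℕ} (hN : 1 < N) (hNk : (N : k) = 0) : (X ^ N - X : k[X]).roots.toFinset.card = N := by
  have : CharP k (ringChar k) := ringChar.charP k
  have hsep : (X ^ N - X : k[X]).Separable := galois_poly_separable _ N (ringChar.dvd hNk)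
  rw [Multiset.toFinset_card_of_nodup (nodup_roots hsep), IsAlgClosed.card_roots_eq_natDegree,
    FiniteField.X_pow_card_sub_X_natDegree_eq k hN]

lemma eq_zero_of_forall_sum_mul_pow_pow_eq_zero {k : Type*} [Field k] [IsAlgClosed k] {q m : ℕ}
    (hq : 1 < q) (hqk : (q : k) = 0) (hm : 0 < m) {v : Fin m → k}
    (hv : ∀ x : k, x ^ q ^ m = x → ∑ i, v i * x ^ q ^ (i : ℕ) = 0) : v = 0 := by
  classical
  set P : k[X] := ∑ i, C (v i) * X ^ q ^ (i : ℕ)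
  have hqm : 1 < q ^ m := Nat.one_lt_pow hm.ne' hq
  have hroots := card_roots_toFinset_X_pow_sub_X (k := k) hqm
    (by rw [Nat.cast_pow, hqk, zero_pow hm.ne'])
  have hdeg : P.natDegree < (X ^ q ^ m - X : k[X]).roots.toFinset.card := by
    rw [hroots]
    refine (natDegree_sum_le_of_forall_le _ _ fun i _ => ?_).trans_lt
      (Nat.pow_lt_pow_right hq (Nat.sub_one_lt hm.ne'))
    exact (natDegree_C_mul_X_pow_le _ _).trans (Nat.pow_le_pow_right hq.le (by omega))
  have hP : P = 0 := by
    refine eq_zero_of_natDegree_lt_card_of_eval_eq_zero' P _ (fun x hx => ?_) hdeg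
    rw [Multiset.mem_toFinset, mem_roots (FiniteField.X_pow_card_sub_X_ne_zero k hqm), IsRoot,
      eval_sub, eval_pow, eval_X, sub_eq_zero] at hx
    simpa [P, eval_finsetSum] using hv x hx
  funext i
  have := congrArg (coeff · (q ^ (i : ℕ))) hP
  simpa [P, finsetSum_coeff, coeff_C_mul_X_pow, (Nat.pow_right_injective hq).eq_iff,
    Fin.val_inj] using this

/-- The column of `x` in a Moore matrix. -/
def mooreVector {k : Type*} [Field k] (q m : ℕ) (x : k) : Fin m → k := fun i => x ^ q ^ (i : ℕ)

lemma span_mooreVector_eq_top {k : Type*} [Field k] [IsAlgClosed k] {q m : ℕ} (hq : 1 < q)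
    (hqk : (q : k) = 0) (hm : 0 < m) :
    Submodule.span k (Set.range fun x : {x : k // x ^ q ^ m = x} => mooreVector q m x.1) = ⊤ := by
  by_contra hne
  obtain ⟨ℓ, hℓ, hker⟩ :=
    Submodule.exists_dual_map_eq_bot_of_lt_top (lt_top_iff_ne_top.mpr hne) inferInstance
  have hv := eq_zero_of_forall_sum_mul_pow_pow_eq_zero hq hqk hm
    (v := fun i => ℓ fun j => if i = j then 1 else 0) fun x hx => by
      have : ℓ (mooreVector q m x) = 0 := by
        rw [← Submodule.mem_bot k, ← hker]
        exact Submodule.mem_map_of_mem (Submodule.subset_span ⟨⟨x, hx⟩, rfl⟩)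
      rw [LinearMap.pi_apply_eq_sum_univ] at this
      simpa [mooreVector, mul_comm] using this
  refine hℓ (LinearMap.ext fun w => ?_)
  simp [LinearMap.pi_apply_eq_sum_univ ℓ w, fun i => congrFun hv i]

lemma span_range_coe_basis {F k V ι : Type*} [CommSemiring F] [Semiring k] [Algebra F k]
    [AddCommMonoid V] [Module F V] [Module k V] [IsScalarTower F k V] {W : Submodule F V}
    (b : Module.Basis ι F W) :
    Submodule.span k (Set.range fun i => (b i : V)) = Submodule.span k (W : Set V) := by
  rw [← Submodule.span_span_of_tower F, show (fun i => (b i : V)) = W.subtype ∘ b from rfl,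
    Set.range_comp, Submodule.span_image, b.span_eq, Submodule.map_top, Submodule.range_subtype]

namespace FrobeniusMap

variable {q : ℕ} {k V : Type*} [Field k] [AddCommGroup V] [Module k V] (Fr : FrobeniusMap q k V)

def toAddMonoidHom : V →+ V := AddMonoidHom.mk' Fr.toFun Fr.map_add

lemma map_zero : Fr.toFun 0 = 0 := Fr.toAddMonoidHom.map_zero

lemma map_sum_smul {ι : Type*} (s : Finset ι) (c : ι → k) (v : ι → V) :
    Fr.toFun (∑ i ∈ s, c i • v i) = ∑ i ∈ s, c i ^ q • Fr.toFun (v i) := by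
  simp only [← Fr.map_smulq]
  exact map_sum Fr.toAddMonoidHom _ s

theorem linearIndependent_of_forall_fixed {F : Type*} [Field F] [Fintype F] [Algebra F k]
    [Module F V] [IsScalarTower F k V] (hF : Fintype.card F = q) {ι : Type*} {v : ι → V}
    (hfix : ∀ i, Fr.toFun (v i) = v i) (hv : LinearIndependent F v) : LinearIndependent k v := by
  classical
  rw [linearIndependent_iff']
  intro s
  induction s using Finset.strongInduction with
  | H s ih =>
  intro g hg i hi
  by_contra hgi
  set h : ι → k := fun j => (g i)⁻¹ * g j
  have hhi : h i = 1 := inv_mul_cancel₀ hgi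
  have hrel : ∑ j ∈ s, h j • v j = 0 := by
    simp only [h, mul_smul, ← Finset.smul_sum, hg, smul_zero]
  have hrel_frob : ∑ j ∈ s, h j ^ q • v j = 0 := by
    simpa [Fr.map_sum_smul, hfix, Fr.map_zero] using congrArg Fr.toFun hrel
  have hrel_diff : ∑ j ∈ s.erase i, (h j ^ q - h j) • v j = 0 := by
    rw [Finset.sum_erase _ (by simp [hhi])]
    simp [sub_smul, Finset.sum_sub_distrib, hrel, hrel_frob]
  have hfixed : ∀ j ∈ s, h j ^ q = h j := by
    intro j hj
    rcases eq_or_ne j i with rfl | hji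
    · simp [hhi]
    · exact sub_eq_zero.mp
        (ih _ (Finset.erase_ssubset hi) _ hrel_diff j (Finset.mem_erase.mpr ⟨hji, hj⟩))
  have hmem_F : ∀ j, ∃ c : F, j ∈ s → algebraMap F k c = h j := by
    intro j
    by_cases hj : j ∈ s
    · obtain ⟨c, hc⟩ := mem_range_algebraMap_of_pow_card_eq (hF ▸ hfixed j hj)
      exact ⟨c, fun _ => hc⟩
    · exact ⟨0, (absurd · hj)⟩
  choose c hc using hmem_F
  have hrelF : ∑ j ∈ s, c j • v j = 0 := by
    rw [← hrel]
    exact Finset.sum_congr rfl fun j hj => by rw [← hc j hj, algebraMap_smul]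
  have := hc i hi
  rw [linearIndependent_iff'.mp hv s c hrelF i hi, _root_.map_zero, hhi] at this
  exact zero_ne_one this

/-- Frobenius shifts the terms of the sum by one index, and the last term equals the first. -/
lemma map_sum_pow_smul_iterate {x : k} {a : V} {m : ℕ} (hx : x ^ q ^ m = x)
    (ha : Fr.toFun^[m] a = a) :
    Fr.toFun (∑ i ∈ Finset.range m, x ^ q ^ i • Fr.toFun^[i] a) =
      ∑ i ∈ Finset.range m, x ^ q ^ i • Fr.toFun^[i] a := by
  set f : ℕ → V := fun i => x ^ q ^ i • Fr.toFun^[i] a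
  have hshift : ∀ i, (x ^ q ^ i) ^ q • Fr.toFun (Fr.toFun^[i] a) = f (i + 1) := fun i => by
    rw [← pow_mul, ← pow_succ, ← Function.iterate_succ_apply' Fr.toFun]
  have hperiod : f m = f 0 := by simp [f, hx, ha]
  rw [map_sum_smul]
  simp only [hshift]
  have := (Finset.sum_range_succ' f m).symm.trans (Finset.sum_range_succ f m)
  rwa [hperiod, add_left_inj] at this

theorem mem_span_fixed_of_iterate_eq [IsAlgClosed k] (hq : 1 < q) (hqk : (q : k) = 0) {m : ℕ}
    (hm : 0 < m) {a : V} (ha : Fr.toFun^[m] a = a) :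
    a ∈ Submodule.span k {v | Fr.toFun v = v} := by
  classical
  let T := Fintype.linearCombination k fun i : Fin m => Fr.toFun^[i] a
  have hT_fixed (x : k) (hx : x ^ q ^ m = x) :
      Fr.toFun (T (mooreVector q m x)) = T (mooreVector q m x) := by
    simp only [T, Fintype.linearCombination_apply, mooreVector]
    rw [Fin.sum_univ_eq_sum_range (fun i => x ^ q ^ i • Fr.toFun^[i] a) m]
    exact Fr.map_sum_pow_smul_iterate hx ha
  have hT_single : T (Pi.single ⟨0, hm⟩ 1) = a := by simp [T]
  have hsingle : Pi.single ⟨0, hm⟩ 1 ∈ Submodule.span k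
      (Set.range fun x : {x : k // x ^ q ^ m = x} => mooreVector q m x.1) := by
    rw [span_mooreVector_eq_top hq hqk hm]
    trivial
  have := Submodule.mem_map_of_mem (f := T) hsingle
  rw [Submodule.map_span, hT_single] at this
  refine Submodule.span_mono ?_ this
  rintro _ ⟨_, ⟨x, rfl⟩, rfl⟩
  exact hT_fixed x.1 x.2

theorem span_fixed_eq_top [IsAlgClosed k] (hq : 1 < q) (hqk : (q : k) = 0) :
    Submodule.span k {v | Fr.toFun v = v} = ⊤ := by
  refine Submodule.eq_top_iff'.mpr fun a => ?_
  obtain ⟨m, hm, ha⟩ := Fr.locally_finite a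
  exact Fr.mem_span_fixed_of_iterate_eq hq hqk hm ha

end FrobeniusMap

namespace FrobeniusAlgMor

variable {q : ℕ} {k A : Type*} [Field k] [Ring A] [Algebra k A] (Fr : FrobeniusAlgMor q k A)

lemma map_algebraMap (c : k) : Fr.toFun (algebraMap k A c) = algebraMap k A (c ^ q) := by
  rw [Algebra.algebraMap_eq_smul_one, Algebra.algebraMap_eq_smul_one, Fr.map_smulq, Fr.map_one]

def fixedSubalgebra (F : Type*) [Field F] [Fintype F] [Algebra F k] [Algebra F A]
    [IsScalarTower F k A] (hF : Fintype.card F = q) : Subalgebra F A where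
  carrier := {a | Fr.toFun a = a}
  mul_mem' {a b} ha hb := by rw [Set.mem_ofPred_eq, Fr.map_mul, ha, hb]
  one_mem' := Fr.map_one
  add_mem' {a b} ha hb := by rw [Set.mem_ofPred_eq, Fr.map_add, ha, hb]
  zero_mem' := Fr.map_zero
  algebraMap_mem' c := by
    rw [Set.mem_ofPred_eq, IsScalarTower.algebraMap_apply F k A, Fr.map_algebraMap, ← map_pow,
      ← hF, FiniteField.pow_card]

end FrobeniusAlgMor

theorem fixedPoints_subalgebra_and_baseChange_general
    (q : ℕ)
    (F : Type) [Field F] [Fintype F] (hF : Fintype.card F = q)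
    (k : Type) [Field k] [Algebra F k] [IsAlgClosure F k]
    (A : Type) [Ring A] [Algebra k A] [Algebra F A] [IsScalarTower F k A]
    (Fr : FrobeniusAlgMor q k A) :
    ∃ S : Subalgebra F A, (∀ a : A, a ∈ S ↔ Fr.toFun a = a) ∧
      ∃ e : (k ⊗[F] S) ≃ₐ[k] A, ∀ (c : k) (s : S), e (c ⊗ₜ[F] s) = c • (s : A) := by
  have : IsAlgClosed k := IsAlgClosure.isAlgClosed F
  have hq : 1 < q := hF ▸ Fintype.one_lt_card
  have hqk : (q : k) = 0 := by
    rw [← hF, ← map_natCast (algebraMap F k), FiniteField.cast_card_eq_zero, map_zero]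
  let S := Fr.fixedSubalgebra F hF
  let b := Module.Basis.ofVectorSpace F S
  let φ : k ⊗[F] S →ₐ[k] A :=
    Algebra.TensorProduct.lift (Algebra.ofId k A) S.val fun c s => Algebra.commutes c (s : A)
  have hφ (c : k) (s : S) : φ (c ⊗ₜ s) = c • (s : A) := (Algebra.smul_def c (s : A)).symm
  have hφb : φ.toLinearMap ∘ b.baseChange k = fun i => (b i : A) := by
    funext i
    simp [hφ]
  have hli : LinearIndependent k fun i => (b i : A) :=
    Fr.linearIndependent_of_forall_fixed hF (fun i => (b i).2)
      (b.linearIndependent.map' S.toSubmodule.subtype (Submodule.ker_subtype _))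
  have hsp : Submodule.span k (Set.range fun i => (b i : A)) = ⊤ :=
    (span_range_coe_basis (W := S.toSubmodule) b).trans (Fr.span_fixed_eq_top hq hqk)
  exact ⟨S, fun _ => Iff.rfl, AlgEquiv.ofBijective φ
    (LinearMap.bijective_of_linearIndependent_of_span_eq_top (b.baseChange k).span_eq
      (hφb ▸ hli) (hφb ▸ hsp)), hφ⟩

/-- The fixed points of a Frobenius morphism on a `k`-algebra `A` form an
`𝔽_q`-subalgebra `S` of `A`, and `k ⊗_{𝔽_q} S ≃ A` as `k`-algebras via
`λ ⊗ a ↦ λ • a`. -/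
theorem fixedPoints_subalgebra_and_baseChange
    (p n q : ℕ) (hp : p.Prime) (hn : 0 < n) (hq : q = p ^ n)
    (F : Type) [Field F] [Fintype F] (hF : Fintype.card F = q)
    (k : Type) [Field k] [Algebra F k] [IsAlgClosure F k]
    (A : Type) [Ring A] [Algebra k A] [Algebra F A] [IsScalarTower F k A]
    (Fr : FrobeniusAlgMor q k A) :
    ∃ S : Subalgebra F A, (∀ a : A, a ∈ S ↔ Fr.toFun a = a) ∧
      ∃ e : (k ⊗[F] S) ≃ₐ[k] A, ∀ (c : k) (s : S), e (c ⊗ₜ[F] s) = c • (s : A) :=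
  fixedPoints_subalgebra_and_baseChange_general q F hF k A Fr

end FrobeniusFixedAlg
end

section
/- Let A be a k-algebra with a Frobenius morphism F_A and let M be an F_A-stable finitely generated right A-module with Frobenius morphism F_M. Then M^{F_M} is a module over the 𝔽_q-algebra A^{F_A}, and the natural map k ⊗_{𝔽_q} M^{F_M} → M, λ ⊗ m ↦ λm, is an isomorphism of right A-modules (where k ⊗_{𝔽_q} M^{F_M} is an A-module via the isomorphism k ⊗_{𝔽_q} A^{F_A} ≅ A). -/
/-!
Fixed vectors of `F_M` that are linearly independent over `𝔽_q` stay independent over `k`: in a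
shortest `k`-linear relation normalised to have a coefficient `1`, applying `F_M` and subtracting
gives a shorter relation, so every coefficient satisfies `c ^ q = c` and lies in `𝔽_q`.
They also span: if `F_M^[m+1] v = v`, then for each of the `q ^ (m+1)` roots `c` of
`X ^ q ^ (m+1) - X` the vector `∑_{i ≤ m} c ^ q ^ i • F_M^[i] v` is fixed, and `v` is a
`k`-combination of these because no nonzero polynomial `∑_{i ≤ m} x_i X ^ q ^ i`, of degree
at most `q ^ m`, vanishes at all of those roots.
-/

open scoped TensorProduct

namespace FrobeniusFixedMod

structure FrobeniusMap (q : ℕ) (k : Type*) (V : Type*) [Field k]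
    [AddCommGroup V] [Module k V] where
  toFun : V → V
  bijective : Function.Bijective toFun
  map_add : ∀ v w : V, toFun (v + w) = toFun v + toFun w
  map_smulq : ∀ (c : k) (v : V), toFun (c • v) = c ^ q • toFun v
  locally_finite : ∀ v : V, ∃ m : ℕ, 1 ≤ m ∧ toFun^[m] v = v

structure FrobeniusAlgMor (q : ℕ) (k : Type*) (A : Type*) [Field k] [Ring A]
    [Algebra k A] extends FrobeniusMap q k A where
  map_one : toFun 1 = 1
  map_mul : ∀ a b : A, toFun (a * b) = toFun a * toFun b

end FrobeniusFixedMod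

open Function Finset Polynomial

namespace LinearMap

section FixedSubmodule

variable {K k M : Type*} [Field K] [Field k] [Algebra K k] [AddCommGroup M] [Module k M]
  [Module K M] [IsScalarTower K k M]

def restrictScalarsOfAlgHom (σ : k →ₐ[K] k) (f : M →ₛₗ[(σ : k →+* k)] M) :
    M →ₗ[K] M where
  toFun := f
  map_add' := map_add f
  map_smul' a x := by
    rw [← algebraMap_smul k a x, map_smulₛₗ, AlgHom.coe_toRingHom, AlgHom.commutes,
      algebraMap_smul, RingHom.id_apply]

theorem linearIndependent_of_isFixedPt {σ : k →+* k} (f : M →ₛₗ[σ] M)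
    (hσ : ∀ c, σ c = c → c ∈ Set.range (algebraMap K k)) {ι : Type*} {v : ι → M}
    (hfix : ∀ i, IsFixedPt f (v i)) (hv : LinearIndependent K v) : LinearIndependent k v := by
  classical
  rw [linearIndependent_iff']
  intro s
  induction s using Finset.strongInduction with
  | H s ih =>
  intro g hg i hi
  by_contra hgi
  set g' := fun j => (g i)⁻¹ * g j
  have hg'i : g' i = 1 := inv_mul_cancel₀ hgi
  have hg' : ∑ j ∈ s, g' j • v j = 0 := by simp [g', mul_smul, ← smul_sum, hg]
  have hfg' : ∑ j ∈ s, σ (g' j) • v j = 0 := by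
    simpa [map_sum, map_smulₛₗ, (hfix _).eq] using congrArg f hg'
  have hfixed : ∀ j ∈ s, σ (g' j) = g' j := by
    have hrel : ∑ j ∈ s.erase i, (σ (g' j) - g' j) • v j = 0 := by
      rw [sum_erase _ (by simp [hg'i])]
      simp [sub_smul, sum_sub_distrib, hfg', hg']
    intro j hj
    by_cases hji : j = i
    · simp [hji, hg'i]
    · exact sub_eq_zero.mp (ih _ (erase_ssubset hi) _ hrel j (mem_erase.2 ⟨hji, hj⟩))
  choose! h hh using fun j hj => hσ _ (hfixed j hj)
  have hrelK : ∑ j ∈ s, h j • v j = 0 := by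
    rw [← hg']
    exact sum_congr rfl fun j hj => by rw [← algebraMap_smul k, hh j hj]
  have := linearIndependent_iff'.mp hv s h hrelK i hi
  simp [← hh i hi, this] at hg'i

theorem injective_liftBaseChange_fixedSubmodule (σ : k →ₐ[K] k)
    (f : M →ₛₗ[(σ : k →+* k)] M)
    (hσ : ∀ c, σ c = c → c ∈ Set.range (algebraMap K k)) :
    Injective ((restrictScalarsOfAlgHom σ f).fixedSubmodule.subtype.liftBaseChange k) := by
  set W := (restrictScalarsOfAlgHom σ f).fixedSubmodule
  obtain ⟨ι, b⟩ : Σ ι, Module.Basis ι K W := ⟨_, Module.Basis.ofVectorSpace K W⟩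
  have hfix : ∀ i, IsFixedPt f (b i) := fun i => mem_fixedSubmodule_iff.1 (b i).2
  have hK : LinearIndependent K (W.subtype ∘ b) :=
    b.linearIndependent.map' _ (Submodule.ker_subtype _)
  refine injective_of_linearIndependent (Algebra.TensorProduct.basis k b).span_eq ?_
  have hb : W.subtype.liftBaseChange k ∘ Algebra.TensorProduct.basis k b = W.subtype ∘ b :=
    funext fun i => by simp [Algebra.TensorProduct.basis_apply]
  rw [hb]
  exact linearIndependent_of_isFixedPt f hσ hfix hK

end FixedSubmodule

section Semilinear

variable {k M : Type*} [Field k] [AddCommGroup M] [Module k M] {σ : k →+* k}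

theorem isFixedPt_sum_iterate_smul_iterate (f : M →ₛₗ[σ] M) {m : ℕ} {v : M}
    (hv : f^[m + 1] v = v) {c : k} (hc : σ^[m + 1] c = c) :
    IsFixedPt f (∑ i : Fin (m + 1), σ^[i] c • f^[i] v) := by
  set g : ℕ → M := fun i => σ^[i] c • f^[i] v
  have hshift : ∀ i, f (g i) = g (i + 1) := fun i => by
    simp only [g, map_smulₛₗ, iterate_succ_apply']
  have hperiod : g (m + 1) = g 0 := by simp [g, hv, hc]
  rw [IsFixedPt, Fin.sum_univ_eq_sum_range g, map_sum]
  simp only [hshift]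
  have h := (sum_range_succ' g (m + 1)).symm.trans (sum_range_succ g (m + 1))
  rw [hperiod] at h
  exact add_right_cancel h

theorem mem_span_fixedPoints_of_iterate_eq (f : M →ₛₗ[σ] M) {m : ℕ} {v : M}
    (hv : f^[m + 1] v = v) {E : Set k} (hE : ∀ c ∈ E, σ^[m + 1] c = c)
    (hspan : Submodule.span k (Set.range fun c : E => fun i : Fin (m + 1) => σ^[i] c) = ⊤) :
    v ∈ Submodule.span k (fixedPoints f) := by
  set T := Fintype.linearCombination k fun i : Fin (m + 1) => f^[i] v
  have hT : Submodule.map T ⊤ ≤ Submodule.span k (fixedPoints f) := by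
    rw [← hspan, Submodule.map_span, Submodule.span_le, ← Set.range_comp]
    rintro _ ⟨c, rfl⟩
    exact Submodule.subset_span (isFixedPt_sum_iterate_smul_iterate f hv (hE c c.2))
  exact hT ⟨Pi.single 0 1, trivial, by
    simp [T, Fintype.linearCombination_apply, Pi.single_apply]⟩

end Semilinear

end LinearMap

section

variable {k : Type*} [Field k]

theorem span_range_pow_pow_eq_top {q m : ℕ} (hq : 1 < q) {E : Finset k} (hE : q ^ m < #E) :
    Submodule.span k (Set.range fun c : E => fun i : Fin (m + 1) => (c : k) ^ q ^ (i : ℕ)) =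
      ⊤ := by
  by_contra hne
  obtain ⟨φ, hφ0, hφ⟩ := Submodule.exists_le_ker_of_lt_top _ (lt_top_iff_ne_top.2 hne)
  set x : Fin (m + 1) → k := fun i => φ fun j => if i = j then 1 else 0
  have hφx : ∀ y, φ y = ∑ i, y i * x i := fun y => by
    simp only [LinearMap.pi_apply_eq_sum_univ φ y, smul_eq_mul, x]
  -- a linear form vanishing on the columns is a `q`-polynomial vanishing on `E`
  set P : k[X] := ∑ i, C (x i) * X ^ q ^ (i : ℕ)
  have hPE : ∀ c ∈ E, P.eval c = 0 := fun c hc => by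
    have := hφ (Submodule.subset_span ⟨⟨c, hc⟩, rfl⟩)
    rw [LinearMap.mem_ker, hφx] at this
    simp only [P, eval_finsetSum, eval_mul, eval_C, eval_pow, eval_X]
    simpa only [mul_comm] using this
  have hPdeg : P.natDegree < #E :=
    (natDegree_sum_le_of_forall_le _ _ fun i _ => (natDegree_C_mul_X_pow_le _ _).trans
      (Nat.pow_le_pow_right (by omega) (Fin.is_le i))).trans_lt hE
  have hP : P = 0 := eq_zero_of_natDegree_lt_card_of_eval_eq_zero' P E hPE hPdeg
  have hx : ∀ j, x j = 0 := fun j => by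
    simpa [P, finsetSum_coeff, coeff_C_mul_X_pow, (Nat.pow_right_injective hq).eq_iff,
      Fin.val_inj] using congrArg (coeff · (q ^ (j : ℕ))) hP
  exact hφ0 (LinearMap.ext fun y => by simp [hφx, hx])

theorem card_roots_toFinset_X_pow_sub_X [IsAlgClosed k] [DecidableEq k] {N : ℕ} (hN : 1 < N)
    (h : (N : k) = 0) :
    #(X ^ N - X : k[X]).roots.toFinset = N := by
  rw [Multiset.toFinset_card_of_nodup (nodup_roots (galois_poly_separable _ N (ringChar.dvd h))),
    IsAlgClosed.card_roots_eq_natDegree, FiniteField.X_pow_card_sub_X_natDegree_eq k hN]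

namespace FiniteField

variable {F M : Type*} [Field F] [Fintype F] [Algebra F k] [AddCommGroup M]
  [Module k M] [Module F M] [IsScalarTower F k M]

theorem mem_range_algebraMap_of_pow_card_eq_self {c : k} (hc : c ^ Fintype.card F = c) :
    c ∈ Set.range (algebraMap F k) := by
  classical
  by_contra hcF
  set s := insert c (univ.map ⟨algebraMap F k, (algebraMap F k).injective⟩)
  have hs : #s = Fintype.card F + 1 := by
    rw [card_insert_of_notMem (by simpa using hcF), card_map, card_univ]
  have hroots : ∀ x ∈ s, (X ^ Fintype.card F - X : k[X]).eval x = 0 := by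
    simp [s, sub_eq_zero, hc, ← map_pow, pow_card]
  refine X_pow_card_sub_X_ne_zero k Fintype.one_lt_card
    (eq_zero_of_natDegree_lt_card_of_eval_eq_zero' _ s hroots ?_)
  rw [hs, X_pow_card_sub_X_natDegree_eq k Fintype.one_lt_card]
  omega

theorem surjective_liftBaseChange_fixedSubmodule [IsAlgClosed k]
    (f : M →ₛₗ[(frobeniusAlgHom F k : k →+* k)] M) (hf : ∀ v, ∃ m, f^[m + 1] v = v) :
    Surjective
      ((LinearMap.restrictScalarsOfAlgHom _ f).fixedSubmodule.subtype.liftBaseChange k) := by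
  classical
  rw [← LinearMap.range_eq_top, LinearMap.range_liftBaseChange, Submodule.range_subtype,
    eq_top_iff]
  intro v _
  obtain ⟨m, hv⟩ := hf v
  set q := Fintype.card F
  have hq : 1 < q := Fintype.one_lt_card
  set E := (X ^ q ^ (m + 1) - X : k[X]).roots.toFinset
  have hqk : ((q ^ (m + 1) : ℕ) : k) = 0 := by
    rw [Nat.cast_pow, ← map_natCast (algebraMap F k), cast_card_eq_zero, map_zero,
      zero_pow (Nat.succ_ne_zero m)]
  have hE : #E = q ^ (m + 1) :=
    card_roots_toFinset_X_pow_sub_X (Nat.one_lt_pow (Nat.succ_ne_zero m) hq) hqk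
  have hiterate : ∀ i, (⇑(frobeniusAlgHom F k : k →+* k))^[i] = (· ^ q ^ i) := fun i => by
    simp [coe_frobeniusAlgHom, pow_iterate, q]
  refine LinearMap.mem_span_fixedPoints_of_iterate_eq f hv (E := E) (fun c hc => ?_) ?_
  · rw [hiterate]
    rw [mem_coe, Multiset.mem_toFinset, mem_roots', IsRoot.def, eval_sub, eval_pow,
      eval_X, sub_eq_zero] at hc
    exact hc.2
  · simp only [hiterate]
    exact span_range_pow_pow_eq_top hq (hE ▸ Nat.pow_lt_pow_right hq (Nat.lt_succ_self m))

end FiniteField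

end

namespace FrobeniusFixedMod

theorem fixedPoints_module_and_baseChange_general
    (q : ℕ)
    (F : Type) [Field F] [Fintype F] (hF : Fintype.card F = q)
    (k : Type) [Field k] [Algebra F k] [IsAlgClosure F k]
    (A : Type) [Ring A] [Algebra k A]
    (FA : FrobeniusAlgMor q k A)
    (M : Type) [AddCommGroup M] [Module Aᵐᵒᵖ M]
    [Module k M] [IsScalarTower k Aᵐᵒᵖ M]
    [Module F M] [IsScalarTower F k M]
    (FM : FrobeniusMap q k M)
    -- compatibility `F_M (m · a) = F_M m · F_A a` with the right `A`-action
    (hFM : ∀ (m : M) (a : A),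
      FM.toFun (MulOpposite.op a • m) = MulOpposite.op (FA.toFun a) • FM.toFun m) :
    ∃ (W : Submodule F M) (_ : ∀ m : M, m ∈ W ↔ FM.toFun m = m)
      (hstab : ∀ (a : A), FA.toFun a = a → ∀ m ∈ W, MulOpposite.op a • m ∈ W),
      ∃ e : (k ⊗[F] W) ≃ₗ[k] M,
        (∀ (c : k) (w : W), e (c ⊗ₜ[F] w) = c • (w : M)) ∧
        (∀ (c : k) (w : W) (a : A) (ha : FA.toFun a = a),
          e (c ⊗ₜ[F] (⟨MulOpposite.op a • (w : M), hstab a ha _ w.2⟩ : W)) =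
            MulOpposite.op a • e (c ⊗ₜ[F] w)) := by
  subst hF
  have : IsAlgClosed k := IsAlgClosure.isAlgClosed F
  let f : M →ₛₗ[(FiniteField.frobeniusAlgHom F k : k →+* k)] M :=
    { toFun := FM.toFun, map_add' := FM.map_add, map_smul' := FM.map_smulq }
  have hf : ∀ v, ∃ m, f^[m + 1] v = v := fun v => by
    obtain ⟨m, hm, hv⟩ := FM.locally_finite v
    exact ⟨m - 1, by rwa [Nat.sub_add_cancel hm]⟩
  set W := (LinearMap.restrictScalarsOfAlgHom _ f).fixedSubmodule
  have hstab : ∀ a : A, FA.toFun a = a → ∀ m ∈ W, MulOpposite.op a • m ∈ W :=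
    fun a ha m (hm : FM.toFun m = m) => (hFM m a).trans (by rw [ha, hm])
  have hbij : Bijective (W.subtype.liftBaseChange k) :=
    ⟨LinearMap.injective_liftBaseChange_fixedSubmodule _ f
      fun _ hc => FiniteField.mem_range_algebraMap_of_pow_card_eq_self hc,
      FiniteField.surjective_liftBaseChange_fixedSubmodule f hf⟩
  refine ⟨W, fun m => LinearMap.mem_fixedSubmodule_iff, hstab, .ofBijective _ hbij,
    fun c w => LinearMap.liftBaseChange_tmul .., fun c w a _ => ?_⟩
  simp only [LinearEquiv.ofBijective_apply, LinearMap.liftBaseChange_tmul,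
    Submodule.subtype_apply]
  exact smul_comm c (MulOpposite.op a) (w : M)

/-- The fixed points of a compatible Frobenius morphism on an `F_A`-stable right
`A`-module `M` form a module over the fixed subalgebra, and base change to `k`
recovers `M` as a right `A`-module. -/
theorem fixedPoints_module_and_baseChange
    (p n q : ℕ) (hp : p.Prime) (hn : 0 < n) (hq : q = p ^ n)
    (F : Type) [Field F] [Fintype F] (hF : Fintype.card F = q)
    (k : Type) [Field k] [Algebra F k] [IsAlgClosure F k]
    (A : Type) [Ring A] [Algebra k A]
    (FA : FrobeniusAlgMor q k A)
    (M : Type) [AddCommGroup M] [Module Aᵐᵒᵖ M] [Module.Finite Aᵐᵒᵖ M]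
    [Module k M] [IsScalarTower k Aᵐᵒᵖ M]
    [Module F M] [IsScalarTower F k M]
    (FM : FrobeniusMap q k M)
    -- compatibility `F_M (m · a) = F_M m · F_A a` with the right `A`-action
    (hFM : ∀ (m : M) (a : A),
      FM.toFun (MulOpposite.op a • m) = MulOpposite.op (FA.toFun a) • FM.toFun m) :
    ∃ (W : Submodule F M) (_ : ∀ m : M, m ∈ W ↔ FM.toFun m = m)
      (hstab : ∀ (a : A), FA.toFun a = a → ∀ m ∈ W, MulOpposite.op a • m ∈ W),
      ∃ e : (k ⊗[F] W) ≃ₗ[k] M,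
        (∀ (c : k) (w : W), e (c ⊗ₜ[F] w) = c • (w : M)) ∧
        (∀ (c : k) (w : W) (a : A) (ha : FA.toFun a = a),
          e (c ⊗ₜ[F] (⟨MulOpposite.op a • (w : M), hstab a ha _ w.2⟩ : W)) =
            MulOpposite.op a • e (c ⊗ₜ[F] w)) :=
  fixedPoints_module_and_baseChange_general q F hF k A FA M FM hFM

end FrobeniusFixedMod
end
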